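/- Let Δ_M be the matroid polytope of a matroid M of rank k on [n] with dim Δ_M = n − 1, let v = δ_J be a vertex of Δ_M, and let i ∉ J and j ∈ J. Then δ_J + δ_i − δ_j is a vertex of Δ_M if and only if i and j are joined by an edge of the graph Γ(R_v(Δ_M)). -/

import Mathlib

open Finset Module

/-- The 0-1 indicator vector `δ_B ∈ ℝ^S` of a finite subset `B` of `S`. -/
def delta {S : Type} [DecidableEq S] (B : Finset S) : S → ℝ := fun i => if i ∈ B then 1 else 0

/-- A matroid of rank `k` on `S`, given by its collection of bases: a nonempty collection of
`k`-element subsets satisfying the exchange property. -/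
def IsMatroid {S : Type} [DecidableEq S] (k : ℕ) (M : Finset (Finset S)) : Prop :=
  M.Nonempty ∧ (∀ I ∈ M, I.card = k) ∧
    ∀ I ∈ M, ∀ J ∈ M, I ≠ J → ∀ i ∈ I \ J, ∃ j ∈ J \ I, insert j (I.erase i) ∈ M

/-- The matroid polytope: the convex hull of the indicator vectors of the members of `M`. -/
def matroidPolytope {S : Type} [DecidableEq S] (M : Finset (Finset S)) : Set (S → ℝ) :=
  convexHull ℝ (delta '' (M : Set (Finset S)))

/-- The hypersimplex `Δ_{S,k}`: the convex hull of all `δ_B` with `|B| = k`. -/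
def hypersimplex (S : Type) [DecidableEq S] (k : ℕ) : Set (S → ℝ) :=
  convexHull ℝ (delta '' {B : Finset S | B.card = k})

/-- `E` is an edge (a one-dimensional face) of the polytope `P`. -/
def IsEdgeOf {S : Type} (P E : Set (S → ℝ)) : Prop :=
  IsExposed ℝ P E ∧ Module.finrank ℝ (affineSpan ℝ E).direction = 1

/-- The dimension of a polytope: the dimension of its affine span. -/
noncomputable def polyDim {S : Type} (P : Set (S → ℝ)) : ℕ :=
  Module.finrank ℝ (affineSpan ℝ P).direction

/-- A polytope `P` of dimension `d` is simple at a vertex `v` if `v` lies on exactly `d` edges. -/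
def IsSimpleAt {S : Type} (P : Set (S → ℝ)) (v : S → ℝ) : Prop :=
  {E : Set (S → ℝ) | IsEdgeOf P E ∧ v ∈ E}.ncard = polyDim P

/-- A polytope is simple if it is simple at every vertex. -/
def IsSimplePolytope {S : Type} (P : Set (S → ℝ)) : Prop :=
  ∀ v ∈ Set.extremePoints ℝ P, IsSimpleAt P v

/-- The hypersimplex `Δ_{J,k}` on the subset `J` of `S`, viewed inside `ℝ^S`:
the convex hull of all `δ_B` with `B ⊆ J`, `|B| = k`. -/
def hypersimplexOn {S : Type} [DecidableEq S] (J : Finset S) (k : ℕ) : Set (S → ℝ) :=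
  convexHull ℝ (delta '' {B : Finset S | B ⊆ J ∧ B.card = k})

/-- The `i`-th standard basis vector `δ_i` of `ℝⁿ`. -/
def stdBasis (n : ℕ) (i : Fin n) : Fin n → ℝ := fun j => if j = i then 1 else 0

/-- The set `Φ = {δ_i − δ_j : i ≠ j in [n]}`. -/
def Phi (n : ℕ) : Set (Fin n → ℝ) :=
  {x | ∃ i j : Fin n, i ≠ j ∧ x = stdBasis n i - stdBasis n j}

/-- For `R ⊆ Φ` with `R ∩ (−R) = ∅`, the simple graph `Γ(R)` on vertex set `[n]` in which
`{i, j}` is an edge iff `δ_i − δ_j ∈ R` or `δ_j − δ_i ∈ R`. -/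
def Gamma (n : ℕ) (R : Set (Fin n → ℝ)) : SimpleGraph (Fin n) :=
  SimpleGraph.fromRel (fun i j => stdBasis n i - stdBasis n j ∈ R)

/-- For a vertex `v = δ_J` of the matroid polytope `Δ_M`, the set
`R_v(Δ_M) = {δ_i − δ_j : ∃ I ∈ M, δ_Iδ_J is an edge of Δ_M, {i} = I \ J, {j} = J \ I}`. -/
def Rv (n : ℕ) (M : Finset (Finset (Fin n))) (J : Finset (Fin n)) : Set (Fin n → ℝ) :=
  {x | ∃ I ∈ M, IsEdgeOf (matroidPolytope M) (segment ℝ (delta I) (delta J)) ∧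
    ∃ i j : Fin n, I \ J = {i} ∧ J \ I = {j} ∧ x = stdBasis n i - stdBasis n j}

/-! The point `δ_J + δ_i − δ_j` is `δ_I` for the exchange `I = J − j + i`. Every 0/1 vector is a
vertex of the cube `[0,1]^n`, so `δ_I` is a vertex of `Δ_M` exactly when `I ∈ M`. On the other
hand, for bases `B₁, B₂` with `|B₁ \ B₂| = 1` the functional `x ↦ Σ_{t ∈ B₁} x_t + Σ_{t ∈ B₂} x_t`
takes the value `|B₁ ∩ C| + |B₂ ∩ C| ≤ 2k − 1` at a basis `C`, with equality only for
`C ∈ {B₁, B₂}`; so the segment `δ_{B₁}δ_{B₂}` is an edge. Hence `R_v` consists exactly of the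
`δ_a − δ_b` for which `J − b + a` is a basis, and `δ_j − δ_i` is never among them because
`j ∈ J`. -/

theorem mem_convexHull_sep_eq_of_le {E : Type*} [AddCommGroup E] [Module ℝ E] {s : Set E}
    {l : E →ₗ[ℝ] ℝ} {c : ℝ} (hs : ∀ y ∈ s, l y ≤ c) {x : E} (hx : x ∈ convexHull ℝ s)
    (hlx : l x = c) : x ∈ convexHull ℝ {y ∈ s | l y = c} := by
  classical
  rw [_root_.convexHull_eq] at hx
  obtain ⟨ι, t, w, z, hw₀, hw₁, hz, rfl⟩ := hx
  have hslack : ∑ i ∈ t, w i * (c - l (z i)) = 0 := by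
    have hl : l (t.centerMass w z) = ∑ i ∈ t, w i * l (z i) := by
      simp [Finset.centerMass_eq_of_sum_1 _ _ hw₁, smul_eq_mul]
    simp only [mul_sub, Finset.sum_sub_distrib, ← Finset.sum_mul, hw₁, one_mul, ← hl, hlx,
      sub_self]
  have hlevel : ∀ i ∈ t, w i ≠ 0 → l (z i) = c := fun i hi hwi => by
    have := (Finset.sum_eq_zero_iff_of_nonneg fun i hi =>
      mul_nonneg (hw₀ i hi) (sub_nonneg.2 (hs _ (hz i hi)))).1 hslack i hi
    linarith [(mul_eq_zero.1 this).resolve_left hwi]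
  rw [← Finset.centerMass_filter_ne_zero]
  refine Finset.centerMass_mem_convexHull _ (fun i hi => hw₀ i (Finset.mem_filter.1 hi).1)
    (by rw [Finset.sum_filter_ne_zero, hw₁]; exact one_pos) fun i hi => ?_
  obtain ⟨hi, hwi⟩ := Finset.mem_filter.1 hi
  exact ⟨hz i hi, hlevel i hi hwi⟩

theorem isExposed_convexHull_sep_eq_of_le {E : Type*} [AddCommGroup E] [Module ℝ E]
    [TopologicalSpace E] {s : Set E} {l : StrongDual ℝ E} {c : ℝ} (hs : ∀ y ∈ s, l y ≤ c) :
    IsExposed ℝ (convexHull ℝ s) (convexHull ℝ {y ∈ s | l y = c}) := by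
  rintro ⟨x₀, hx₀⟩
  have hlevel : ∀ x ∈ convexHull ℝ {y ∈ s | l y = c}, l x = c := fun x hx =>
    convexHull_min (fun y hy => hy.2) (convex_hyperplane l.isLinear c) hx
  have hle : ∀ x ∈ convexHull ℝ s, l x ≤ c := fun x hx =>
    convexHull_min hs (convex_halfSpace_le l.isLinear c) hx
  refine ⟨l, Set.ext fun x => ⟨fun hx => ⟨convexHull_mono (Set.sep_subset _ _) hx,
    fun y hy => (hle y hy).trans (hlevel x hx).ge⟩, fun ⟨hx, hmax⟩ => ?_⟩⟩
  refine mem_convexHull_sep_eq_of_le (l := l.toLinearMap) hs hx (le_antisymm (hle x hx) ?_)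
  exact (hlevel x₀ hx₀).symm.le.trans (hmax x₀ (convexHull_mono (Set.sep_subset _ _) hx₀))

theorem finrank_direction_affineSpan_segment {E : Type*} [AddCommGroup E] [Module ℝ E] {x y : E}
    (h : x ≠ y) : finrank ℝ (affineSpan ℝ (segment ℝ x y)).direction = 1 := by
  rw [← convexHull_pair, affineSpan_convexHull, direction_affineSpan, vectorSpan_pair,
    finrank_span_singleton (vsub_ne_zero.2 h)]

theorem Finset.card_inter_eq_card_iff {α : Type*} [DecidableEq α] {B C : Finset α}
    (h : #B = #C) : #(B ∩ C) = #B ↔ B = C := by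
  refine ⟨fun hBC => ?_, fun hBC => by rw [hBC, inter_self]⟩
  have hsub : B ⊆ C := inter_eq_left.1 (eq_of_subset_of_card_le inter_subset_left hBC.ge)
  exact eq_of_subset_of_card_le hsub h.ge

theorem Finset.card_inter_add_card_inter_of_card_sdiff_eq_one {α : Type*} [DecidableEq α]
    {k : ℕ} {B₁ B₂ C : Finset α} (hB₁ : #B₁ = k) (hB₂ : #B₂ = k) (hC : #C = k)
    (h : #(B₁ \ B₂) = 1) :
    #(B₁ ∩ C) + #(B₂ ∩ C) + 1 ≤ 2 * k ∧ (#(B₁ ∩ C) + #(B₂ ∩ C) + 1 = 2 * k ↔ C = B₁ ∨ C = B₂) := by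
  have hcommon : #(B₁ ∩ B₂) + 1 = k := by
    rw [← hB₁, ← card_sdiff_add_card_inter B₁ B₂, h, add_comm]
  by_cases h₁ : C = B₁
  · subst h₁
    rw [inter_self, inter_comm, hB₁]
    simp only [true_or, iff_true]
    omega
  by_cases h₂ : C = B₂
  · subst h₂
    rw [inter_self, hB₂]
    simp only [or_true, iff_true]
    omega
  have hlt : ∀ B, #B = k → B ≠ C → #(B ∩ C) < k := fun B hB hne =>
    hB ▸ lt_of_le_of_ne (card_le_card inter_subset_left)
      ((card_inter_eq_card_iff (hB.trans hC.symm)).not.2 hne)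
  have := hlt B₁ hB₁ (Ne.symm h₁)
  have := hlt B₂ hB₂ (Ne.symm h₂)
  simp only [h₁, h₂, or_self, iff_false]
  omega

section Indicator

variable {S : Type} [DecidableEq S]

theorem delta_injective : Function.Injective (delta (S := S)) := fun B C h => by
  ext t
  have := congrFun h t
  unfold delta at this
  split_ifs at this <;> simp_all

theorem delta_mem_Icc (B : Finset S) : delta B ∈ Set.Icc 0 1 := by
  constructor <;> intro t <;> unfold delta <;> split_ifs <;> norm_num

theorem delta_mem_extremePoints_Icc (B : Finset S) :
    delta B ∈ Set.extremePoints ℝ (Set.Icc 0 1) := by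
  rw [← Set.pi_univ_Icc, extremePoints_pi]
  intro t _
  by_cases ht : t ∈ B <;> simp [delta, ht]

theorem delta_mem_extremePoints_convexHull_iff {𝒜 : Set (Finset S)} {B : Finset S} :
    delta B ∈ Set.extremePoints ℝ (convexHull ℝ (delta '' 𝒜)) ↔ B ∈ 𝒜 := by
  refine ⟨fun h => delta_injective.mem_set_image.1 (extremePoints_convexHull_subset h),
    fun hB => ?_⟩
  have hcube : convexHull ℝ (delta '' 𝒜) ⊆ Set.Icc 0 1 :=
    convexHull_min (Set.image_subset_iff.2 fun C _ => delta_mem_Icc C) (convex_Icc 0 1)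
  exact inter_extremePoints_subset_extremePoints_of_subset hcube
    ⟨subset_convexHull ℝ _ ⟨B, hB, rfl⟩, delta_mem_extremePoints_Icc B⟩

noncomputable def coordSum (B : Finset S) : StrongDual ℝ (S → ℝ) :=
  ∑ t ∈ B, ContinuousLinearMap.proj t

theorem coordSum_delta (B C : Finset S) : coordSum B (delta C) = #(B ∩ C) := by
  simp [coordSum, delta]

theorem isEdgeOf_segment_delta {k : ℕ} {M : Finset (Finset S)} (hcard : ∀ C ∈ M, #C = k)
    {B₁ B₂ : Finset S} (hB₁ : B₁ ∈ M) (hB₂ : B₂ ∈ M) (h : #(B₁ \ B₂) = 1) :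
    IsEdgeOf (matroidPolytope M) (segment ℝ (delta B₁) (delta B₂)) := by
  set l := coordSum B₁ + coordSum B₂
  have hl : ∀ C ∈ M, l (delta C) + 1 ≤ 2 * k ∧ (l (delta C) + 1 = 2 * k ↔ C = B₁ ∨ C = B₂) :=
    fun C hC => by
      have := Finset.card_inter_add_card_inter_of_card_sdiff_eq_one (hcard B₁ hB₁)
        (hcard B₂ hB₂) (hcard C hC) h
      simp only [l, add_apply, coordSum_delta]
      exact_mod_cast this
  have hface : {y ∈ delta '' (M : Set (Finset S)) | l y = 2 * k - 1} = {delta B₁, delta B₂} := by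
    ext y
    constructor
    · rintro ⟨⟨C, hC, rfl⟩, hy⟩
      rcases (hl C hC).2.1 (by linarith) with rfl | rfl <;> simp
    · rintro (rfl | rfl)
      · exact ⟨⟨B₁, hB₁, rfl⟩, by linarith [(hl B₁ hB₁).2.2 (Or.inl rfl)]⟩
      · exact ⟨⟨B₂, hB₂, rfl⟩, by linarith [(hl B₂ hB₂).2.2 (Or.inr rfl)]⟩
  have hne : delta B₁ ≠ delta B₂ := fun heq => by
    simp [delta_injective heq] at h
  refine ⟨?_, finrank_direction_affineSpan_segment hne⟩
  rw [← convexHull_pair, ← hface]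
  refine isExposed_convexHull_sep_eq_of_le ?_
  rintro _ ⟨C, hC, rfl⟩
  linarith [(hl C hC).1]

end Indicator

theorem eq_and_eq_of_stdBasis_sub_eq {n : ℕ} {a b c d : Fin n} (hcd : c ≠ d)
    (h : stdBasis n a - stdBasis n b = stdBasis n c - stdBasis n d) : a = c ∧ b = d := by
  have hc := congrFun h c
  have hd := congrFun h d
  simp only [Pi.sub_apply, stdBasis] at hc hd
  split_ifs at hc hd <;> grind

theorem Finset.eq_insert_erase_iff {α : Type*} [DecidableEq α] {I J : Finset α} {a b : α}
    (ha : a ∉ J) (hb : b ∈ J) : I = insert a (J.erase b) ↔ I \ J = {a} ∧ J \ I = {b} := by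
  simp only [Finset.ext_iff, mem_sdiff, mem_insert, mem_erase, mem_singleton]
  grind

theorem stdBasis_sub_mem_Rv_iff {n k : ℕ} {M : Finset (Finset (Fin n))}
    (hcard : ∀ C ∈ M, #C = k) {J : Finset (Fin n)} (hJ : J ∈ M) {a b : Fin n} :
    stdBasis n a - stdBasis n b ∈ Rv n M J ↔ a ∉ J ∧ b ∈ J ∧ insert a (J.erase b) ∈ M := by
  constructor
  · rintro ⟨I, hI, -, c, d, hIJ, hJI, hx⟩
    have hc : c ∈ I \ J := hIJ ▸ mem_singleton_self c
    have hd : d ∈ J \ I := hJI ▸ mem_singleton_self d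
    have hcd : c ≠ d := fun h => (mem_sdiff.1 hc).2 (h ▸ (mem_sdiff.1 hd).1)
    obtain ⟨rfl, rfl⟩ := eq_and_eq_of_stdBasis_sub_eq hcd hx
    refine ⟨(mem_sdiff.1 hc).2, (mem_sdiff.1 hd).1, ?_⟩
    rwa [← (Finset.eq_insert_erase_iff (mem_sdiff.1 hc).2 (mem_sdiff.1 hd).1).2 ⟨hIJ, hJI⟩]
  · rintro ⟨ha, hb, hI⟩
    obtain ⟨hIJ, hJI⟩ := (Finset.eq_insert_erase_iff ha hb).1 rfl
    exact ⟨_, hI, isEdgeOf_segment_delta hcard hI hJ (by rw [hIJ, card_singleton]),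
      a, b, hIJ, hJI, rfl⟩

theorem delta_add_stdBasis_sub_stdBasis {n : ℕ} {J : Finset (Fin n)} {i j : Fin n}
    (hi : i ∉ J) (hj : j ∈ J) :
    delta J + stdBasis n i - stdBasis n j = delta (insert i (J.erase j)) := by
  funext t
  simp only [Pi.add_apply, Pi.sub_apply, delta, stdBasis, mem_insert, mem_erase]
  split_ifs <;> grind

theorem vertex_iff_adj_in_gamma_Rv_general
    (n k : ℕ) (M : Finset (Finset (Fin n))) (hM : IsMatroid k M)
    (J : Finset (Fin n)) (hJ : J ∈ M)
    (i j : Fin n) (hi : i ∉ J) (hj : j ∈ J) :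
    (delta J + stdBasis n i - stdBasis n j ∈ Set.extremePoints ℝ (matroidPolytope M)) ↔
      (Gamma n (Rv n M J)).Adj i j := by
  obtain ⟨-, hcard, -⟩ := hM
  rw [delta_add_stdBasis_sub_stdBasis hi hj, matroidPolytope,
    delta_mem_extremePoints_convexHull_iff, Gamma, SimpleGraph.fromRel_adj,
    stdBasis_sub_mem_Rv_iff hcard hJ, stdBasis_sub_mem_Rv_iff hcard hJ]
  have hij : i ≠ j := fun h => hi (h ▸ hj)
  simp [hi, hj, hij]

/-- **Lemma 1.6.** For a matroid polytope `Δ_M` of full dimension `n − 1`, a vertex `v = δ_J`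
of `Δ_M`, and `i ∉ J`, `j ∈ J`: the point `δ_J + δ_i − δ_j` is a vertex of `Δ_M` if and only if
`i` and `j` are joined by an edge of the graph `Γ(R_v(Δ_M))`. -/
theorem vertex_iff_adj_in_gamma_Rv
    (n k : ℕ) (M : Finset (Finset (Fin n))) (hM : IsMatroid k M)
    (hdim : polyDim (matroidPolytope M) = n - 1)
    (J : Finset (Fin n)) (hJ : J ∈ M)
    (i j : Fin n) (hi : i ∉ J) (hj : j ∈ J) :
    (delta J + stdBasis n i - stdBasis n j ∈ Set.extremePoints ℝ (matroidPolytope M)) ↔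
      (Gamma n (Rv n M J)).Adj i j :=
  vertex_iff_adj_in_gamma_Rv_general n k M hM J hJ i j hi hj
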